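/- arXiv:2512.03544 — 3 statements merged into one kernel-verified Lean document; each statement's English description precedes it below -/
import Mathlib

section
/- The 15-puzzle configuration graph on the 4×4 board has exactly two connected components, each of size 16!/2; in particular a configuration is solvable if and only if the permutation of tiles (with the blank in its home position) is even. -/
set_option maxRecDepth 100000

/-- Configurations of the 15-puzzle: bijections from the 16 cells of the 4×4 board
(numbered in row-major order) to the 16 pieces (tile `15` being the blank). -/
abbrev PuzzleConfig : Type := Equiv.Perm (Fin 16)

/-- Two cells of the 4×4 board (in row-major numbering) are adjacent. -/
def cellAdj (a b : Fin 16) : Prop :=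
  (a.val / 4 = b.val / 4 ∧ (a.val % 4 + 1 = b.val % 4 ∨ b.val % 4 + 1 = a.val % 4)) ∨
  (a.val % 4 = b.val % 4 ∧ (a.val / 4 + 1 = b.val / 4 ∨ b.val / 4 + 1 = a.val / 4))

/-- A legal move: slide the tile in a cell adjacent to the blank into the blank's cell. -/
def PuzzleMove (c c' : PuzzleConfig) : Prop :=
  ∃ p : Fin 16, cellAdj p (c.symm 15) ∧ c' = (Equiv.swap p (c.symm 15)).trans c

/-- Reachability by a sequence of moves. -/
def PuzzleReach : PuzzleConfig → PuzzleConfig → Prop :=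
  Relation.ReflTransGen PuzzleMove

namespace Fifteen

open Equiv Equiv.Perm

instance instDecCellAdj : ∀ a b, Decidable (cellAdj a b) := fun a b => by
  unfold cellAdj; infer_instance

theorem cellAdj_symm : ∀ a b, cellAdj a b → cellAdj b a := by decide
theorem cellAdj_ne : ∀ a b, cellAdj a b → a ≠ b := by decide
theorem cellAdj_parity : ∀ a b : Fin 16, cellAdj a b →
    (a.val / 4 + a.val % 4 + (b.val / 4 + b.val % 4)) % 2 = 1 := by decide
theorem exists_adj_gt : ∀ b : Fin 16, b ≠ 15 → ∃ p, cellAdj p b ∧ b.val < p.val := by decide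

theorem blank_after (c : PuzzleConfig) (p : Fin 16) :
    ((Equiv.swap p (c.symm 15)).trans c).symm 15 = p := by
  simp [Equiv.symm_trans_apply]

theorem move_symm {c c' : PuzzleConfig} (h : PuzzleMove c c') : PuzzleMove c' c := by
  obtain ⟨p, hadj, rfl⟩ := h
  refine ⟨c.symm 15, ?_, ?_⟩
  · rw [blank_after]; exact cellAdj_symm _ _ hadj
  · rw [blank_after, Equiv.swap_comm, ← Equiv.trans_assoc, Equiv.swap_swap, Equiv.refl_trans]

theorem reach_symm {c d : PuzzleConfig} (h : PuzzleReach c d) : PuzzleReach d c :=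
  haveI : Std.Symm PuzzleMove := ⟨fun _ _ hm => move_symm hm⟩
  Std.Symm.symm (r := Relation.ReflTransGen PuzzleMove) _ _ h

/-- Sign of the cell occupied by the blank (its "checkerboard colour"). -/
def bSign (b : Fin 16) : ℤˣ := if (b.val / 4 + b.val % 4) % 2 = 0 then 1 else -1

/-- The conserved invariant of the puzzle. -/
def pinv (c : PuzzleConfig) : ℤˣ := Equiv.Perm.sign c * bSign (c.symm 15)

theorem bSign_adj {p b : Fin 16} (h : cellAdj p b) : bSign p = -bSign b := by
  have hpar := cellAdj_parity p b h
  unfold bSign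
  rcases Nat.mod_two_eq_zero_or_one (p.val / 4 + p.val % 4) with h1 | h1 <;>
    rcases Nat.mod_two_eq_zero_or_one (b.val / 4 + b.val % 4) with h2 | h2 <;>
      simp [h1, h2] <;> omega

theorem move_pinv {c c' : PuzzleConfig} (h : PuzzleMove c c') : pinv c' = pinv c := by
  obtain ⟨p, hadj, rfl⟩ := h
  have hmul : (Equiv.swap p (c.symm 15)).trans c = c * Equiv.swap p (c.symm 15) := rfl
  unfold pinv
  rw [blank_after, hmul, map_mul, Equiv.Perm.sign_swap (cellAdj_ne _ _ hadj),
    bSign_adj hadj, mul_neg, mul_neg_one, neg_mul, neg_neg]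

theorem reach_pinv {c d : PuzzleConfig} (h : PuzzleReach c d) : pinv d = pinv c := by
  induction h with
  | refl => rfl
  | tail _ hm ih => rw [move_pinv hm, ih]

theorem move_mul_left {g : Equiv.Perm (Fin 16)} (hg : g 15 = 15) {c c' : PuzzleConfig}
    (h : PuzzleMove c c') : PuzzleMove (g * c) (g * c') := by
  obtain ⟨p, hadj, rfl⟩ := h
  have hsymm : g.symm 15 = 15 := by conv_lhs => rw [← hg, Equiv.symm_apply_apply]
  have hblank : (g * c).symm 15 = c.symm 15 := by
    show (c.trans g).symm 15 = _
    rw [Equiv.symm_trans_apply, hsymm]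
  refine ⟨p, by rwa [hblank], ?_⟩
  rw [hblank]
  show (((Equiv.swap p (c.symm 15)).trans c).trans g) = (Equiv.swap p (c.symm 15)).trans (c.trans g)
  rw [Equiv.trans_assoc]

theorem reach_mul_left {g : Equiv.Perm (Fin 16)} (hg : g 15 = 15) {c d : PuzzleConfig}
    (h : PuzzleReach c d) : PuzzleReach (g * c) (g * d) := by
  induction h with
  | refl => exact Relation.ReflTransGen.refl
  | tail _ hm ih => exact ih.tail (move_mul_left hg hm)

/-- The reachable-from-the-identity configurations with blank at home form a subgroup. -/
def H : Subgroup (Equiv.Perm (Fin 16)) where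
  carrier := {g | g 15 = 15 ∧ PuzzleReach 1 g}
  one_mem' := ⟨rfl, Relation.ReflTransGen.refl⟩
  mul_mem' := by
    rintro g h ⟨hg15, hg⟩ ⟨hh15, hh⟩
    refine ⟨by simp [Equiv.Perm.mul_apply, hh15, hg15], ?_⟩
    have := reach_mul_left hg15 hh
    rw [mul_one] at this
    exact hg.trans this
  inv_mem' := by
    rintro g ⟨hg15, hg⟩
    have hinv15 : g⁻¹ 15 = 15 := by conv_lhs => rw [← hg15]; rw [Equiv.Perm.inv_def, Equiv.symm_apply_apply]
    refine ⟨hinv15, ?_⟩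
    have := reach_mul_left hinv15 hg
    rw [mul_one, inv_mul_cancel] at this
    exact reach_symm this

-- continues inside namespace Fifteen
def applyList : List (Fin 16) → PuzzleConfig → PuzzleConfig
  | [], c => c
  | p :: L, c => applyList L ((Equiv.swap p (c.symm 15)).trans c)

def validList : List (Fin 16) → PuzzleConfig → Prop
  | [], _ => True
  | p :: L, c => cellAdj p (c.symm 15) ∧ validList L ((Equiv.swap p (c.symm 15)).trans c)

instance instDecValid : ∀ L c, Decidable (validList L c) := fun L => by
  induction L with
  | nil => intro c; exact inferInstanceAs (Decidable True)
  | cons p L ih => intro c; exact @instDecidableAnd _ _ _ (ih _)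

theorem reach_applyList : ∀ (L : List (Fin 16)) (c : PuzzleConfig),
    validList L c → PuzzleReach c (applyList L c) := by
  intro L
  induction L with
  | nil => intro c _; exact Relation.ReflTransGen.refl
  | cons p L ih =>
    intro c hv
    exact Relation.ReflTransGen.head ⟨p, hv.1, rfl⟩ (ih _ hv.2)

/-- The basic three-cycle `(0 1 k)` (as a permutation of pieces). -/
def tk (k : Fin 16) : Equiv.Perm (Fin 16) := Equiv.swap 0 k * Equiv.swap 0 1

theorem mem_of_list (L : List (Fin 16)) (g : Equiv.Perm (Fin 16)) (hv : validList L 1)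
    (he : applyList L 1 = g) (h15 : g 15 = 15) : g ∈ H :=
  ⟨h15, he ▸ reach_applyList L 1 hv⟩

def L2 : List (Fin 16) := [14, 10, 9, 8, 4, 0, 1, 5, 4, 8, 9, 10, 6, 5, 1, 2, 6, 10, 14, 15]
def L3 : List (Fin 16) := [14, 10, 6, 2, 1, 0, 4, 5, 1, 2, 3, 7, 6, 5, 4, 0, 1, 2, 6, 7, 3, 2, 6, 10, 14, 15]
def L4 : List (Fin 16) := [14, 13, 9, 5, 4, 0, 1, 5, 9, 13, 14, 15]
def L5 : List (Fin 16) := [14, 13, 12, 8, 4, 0, 1, 5, 4, 8, 12, 13, 14, 15]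
def L6 : List (Fin 16) := [11, 7, 3, 2, 1, 0, 4, 5, 1, 2, 6, 5, 4, 0, 1, 2, 3, 7, 11, 15]
def L7 : List (Fin 16) := [14, 10, 6, 7, 3, 2, 1, 0, 4, 5, 1, 2, 6, 5, 4, 0, 1, 2, 3, 7, 6, 10, 14, 15]
def L8 : List (Fin 16) := [14, 13, 9, 8, 4, 5, 9, 8, 4, 0, 1, 5, 9, 8, 4, 5, 9, 13, 14, 15]
def L9 : List (Fin 16) := [14, 10, 6, 5, 9, 8, 4, 0, 1, 5, 4, 8, 9, 5, 6, 10, 14, 15]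
def L10 : List (Fin 16) := [14, 13, 9, 10, 6, 5, 9, 8, 4, 0, 1, 5, 4, 8, 9, 5, 6, 10, 9, 13, 14, 15]
def L11 : List (Fin 16) := [14, 10, 11, 15, 14, 13, 9, 10, 6, 5, 9, 8, 4, 0, 1, 5, 4, 8, 9, 5, 6, 10, 9, 13, 14, 15, 11, 10, 14, 15]
def L12 : List (Fin 16) := [14, 13, 12, 8, 9, 13, 12, 8, 4, 5, 9, 8, 4, 0, 1, 5, 9, 8, 4, 5, 9, 13, 12, 8, 9, 13, 14, 15]
def L13 : List (Fin 16) := [14, 10, 9, 13, 14, 10, 6, 5, 9, 8, 4, 0, 1, 5, 4, 8, 9, 5, 6, 10, 14, 13, 9, 10, 14, 15]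
def L14 : List (Fin 16) := [11, 10, 14, 13, 9, 10, 6, 5, 9, 8, 4, 0, 1, 5, 4, 8, 9, 5, 6, 10, 9, 13, 14, 10, 11, 15]

theorem tk_mem : ∀ k : Fin 16, k ≠ 0 → k ≠ 1 → k ≠ 15 → tk k ∈ H := by
  intro k h0 h1 h15
  fin_cases k
  · exact absurd rfl h0
  · exact absurd rfl h1
  · exact mem_of_list L2 _ (by decide) (by decide) (by decide)
  · exact mem_of_list L3 _ (by decide) (by decide) (by decide)
  · exact mem_of_list L4 _ (by decide) (by decide) (by decide)
  · exact mem_of_list L5 _ (by decide) (by decide) (by decide)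
  · exact mem_of_list L6 _ (by decide) (by decide) (by decide)
  · exact mem_of_list L7 _ (by decide) (by decide) (by decide)
  · exact mem_of_list L8 _ (by decide) (by decide) (by decide)
  · exact mem_of_list L9 _ (by decide) (by decide) (by decide)
  · exact mem_of_list L10 _ (by decide) (by decide) (by decide)
  · exact mem_of_list L11 _ (by decide) (by decide) (by decide)
  · exact mem_of_list L12 _ (by decide) (by decide) (by decide)
  · exact mem_of_list L13 _ (by decide) (by decide) (by decide)
  · exact mem_of_list L14 _ (by decide) (by decide) (by decide)
  · exact absurd rfl h15

theorem A_identity : ∀ k m : Fin 16, (k ≠ 0 ∧ k ≠ 1 ∧ m ≠ 0 ∧ m ≠ 1) →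
    tk k * tk m = Equiv.swap 0 k * Equiv.swap 1 m := by decide

theorem A_mem {k m : Fin 16} (hk0 : k ≠ 0) (hk1 : k ≠ 1) (hk15 : k ≠ 15)
    (hm0 : m ≠ 0) (hm1 : m ≠ 1) (hm15 : m ≠ 15) :
    Equiv.swap 0 k * Equiv.swap 1 m ∈ H := by
  rw [← A_identity k m ⟨hk0, hk1, hm0, hm1⟩]
  exact mul_mem (tk_mem k hk0 hk1 hk15) (tk_mem m hm0 hm1 hm15)

theorem X_identity : ∀ p q : Fin 16, (p ≠ 0 ∧ p ≠ 1 ∧ q ≠ 0 ∧ q ≠ 1 ∧ p ≠ q) →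
    (Equiv.swap 0 p * Equiv.swap 1 q) * (Equiv.swap 0 q * Equiv.swap 1 p)
      = Equiv.swap p q * Equiv.swap 0 1 := by decide

theorem tkinv_identity : ∀ q : Fin 16, (q ≠ 0 ∧ q ≠ 1) →
    Equiv.swap 1 q * Equiv.swap 0 1 = (tk q)⁻¹ := by decide

theorem w_mem : ∀ p q : Fin 16, p ≠ 15 → q ≠ 15 → p ≠ q →
    Equiv.swap p q * Equiv.swap 0 1 ∈ H := by
  have base : ∀ p q : Fin 16, p ≠ 15 → q ≠ 15 → p ≠ q → p = 0 ∨ p = 1 ∨ q = 0 ∨ q = 1 →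
      Equiv.swap p q * Equiv.swap 0 1 ∈ H := by
    have h01 : ∀ q : Fin 16, q ≠ 0 → q ≠ 15 → Equiv.swap 0 q * Equiv.swap 0 1 ∈ H := by
      intro q hq0 hq15
      by_cases hq1 : q = 1
      · subst hq1; rw [Equiv.swap_mul_self]; exact one_mem H
      · exact tk_mem q hq0 hq1 hq15
    have h1q : ∀ q : Fin 16, q ≠ 1 → q ≠ 15 → Equiv.swap 1 q * Equiv.swap 0 1 ∈ H := by
      intro q hq1 hq15
      by_cases hq0 : q = 0
      · subst hq0; rw [Equiv.swap_comm]; exact h01 1 (by decide) (by decide)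
      · rw [tkinv_identity q ⟨hq0, hq1⟩]; exact inv_mem (tk_mem q hq0 hq1 hq15)
    intro p q hp15 hq15 hpq hcase
    rcases hcase with h | h | h | h
    · subst h; exact h01 q (Ne.symm hpq) hq15
    · subst h; exact h1q q (Ne.symm hpq) hq15
    · subst h; rw [Equiv.swap_comm]; exact h01 p hpq hp15
    · subst h; rw [Equiv.swap_comm]; exact h1q p hpq hp15
  intro p q hp15 hq15 hpq
  by_cases hc : p = 0 ∨ p = 1 ∨ q = 0 ∨ q = 1
  · exact base p q hp15 hq15 hpq hc
  · push_neg at hc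
    obtain ⟨hp0, hp1, hq0, hq1⟩ := hc
    rw [← X_identity p q ⟨hp0, hp1, hq0, hq1, hpq⟩]
    exact mul_mem (A_mem hp0 hp1 hp15 hq0 hq1 hq15) (A_mem hq0 hq1 hq15 hp0 hp1 hp15)

theorem twoSwap_mem {p q r s : Fin 16} (hp : p ≠ 15) (hq : q ≠ 15) (hr : r ≠ 15) (hs : s ≠ 15)
    (hpq : p ≠ q) (hrs : r ≠ s) : Equiv.swap p q * Equiv.swap r s ∈ H := by
  have h1 := w_mem p q hp hq hpq
  have h2 := inv_mem (w_mem r s hr hs hrs)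
  have := mul_mem h1 h2
  rwa [mul_inv_rev, Equiv.swap_inv, Equiv.swap_inv, show
      Equiv.swap p q * Equiv.swap 0 1 * (Equiv.swap 0 1 * Equiv.swap r s)
        = Equiv.swap p q * Equiv.swap r s by
    rw [mul_assoc, Equiv.swap_mul_self_mul]] at this
-- part 3, inside namespace Fifteen
theorem fifteen_not_mem_support {g : Equiv.Perm (Fin 16)} (h : g 15 = 15) :
    (15 : Fin 16) ∉ g.support := Equiv.Perm.notMem_support.mpr h

theorem even_mem : ∀ (n : ℕ) (g : Equiv.Perm (Fin 16)), g.support.card = n →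
    g 15 = 15 → Equiv.Perm.sign g = 1 → g ∈ H := by
  intro n
  induction n using Nat.strong_induction_on with
  | _ n ih =>
    intro g hcard h15 hsign
    by_cases hg1 : g = 1
    · subst hg1; exact one_mem H
    · have h0 : g.support.card ≠ 0 := fun h =>
        hg1 (Equiv.Perm.card_support_eq_zero.mp h)
      have h1 : g.support.card ≠ 1 := Equiv.Perm.card_support_ne_one g
      have h2 : g.support.card ≠ 2 := by
        intro h
        obtain ⟨x, y, hxy, rfl⟩ := Equiv.Perm.card_support_eq_two.mp h
        rw [Equiv.Perm.sign_swap hxy] at hsign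
        exact absurd hsign (by decide)
      have h3 : 3 ≤ g.support.card := by omega
      obtain ⟨a, ha⟩ := Finset.card_pos.mp (show 0 < g.support.card by omega)
      set b := g a with hb
      have hba : b ≠ a := Equiv.Perm.mem_support.mp ha
      have hbsup : b ∈ g.support := by
        rw [Equiv.Perm.mem_support]
        intro hgb
        exact hba (g.injective (hgb.trans hb))
      obtain ⟨x, hx⟩ := Finset.card_pos.mp (show 0 < ((g.support.erase a).erase b).card by
        rw [Finset.card_erase_of_mem (Finset.mem_erase.mpr ⟨hba, hbsup⟩),
          Finset.card_erase_of_mem ha]; omega)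
      have hxb : x ≠ b := (Finset.mem_erase.mp hx).1
      have hxa : x ≠ a := (Finset.mem_erase.mp (Finset.mem_erase.mp hx).2).1
      have hxsup : x ∈ g.support := (Finset.mem_erase.mp (Finset.mem_erase.mp hx).2).2
      have hne15 : ∀ y : Fin 16, y ∈ g.support → y ≠ 15 := fun y hy h =>
        fifteen_not_mem_support h15 (h ▸ hy)
      set cyc := Equiv.swap b x * Equiv.swap b a with hcyc
      have hcyc_mem : cyc ∈ H :=
        twoSwap_mem (hne15 b hbsup) (hne15 x hxsup) (hne15 b hbsup) (hne15 a ha)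
          (Ne.symm hxb) hba
      set h := cyc * g with hh
      have hha : h a = a := by
        rw [hh, hcyc, Equiv.Perm.mul_apply, Equiv.Perm.mul_apply, ← hb,
          Equiv.swap_apply_left, Equiv.swap_apply_of_ne_of_ne hba.symm (Ne.symm hxa)]
      have hsub : h.support ⊆ g.support := by
        intro y hy
        have := Equiv.Perm.support_mul_le cyc g hy
        rcases Finset.mem_union.mp this with hy' | hy'
        · have hsw : ∀ u v : Fin 16, (Equiv.swap u v).support ⊆ {u, v} := by
            intro u v z hz
            rw [Equiv.Perm.mem_support] at hz
            by_contra hmem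
            simp only [Finset.mem_insert, Finset.mem_singleton, not_or] at hmem
            exact hz (Equiv.swap_apply_of_ne_of_ne hmem.1 hmem.2)
          have : cyc.support ⊆ {b, x} ∪ {b, a} :=
            le_trans (Equiv.Perm.support_mul_le _ _)
              (Finset.union_subset_union (hsw b x) (hsw b a))
          rcases Finset.mem_union.mp (this hy') with hm | hm <;>
            rcases Finset.mem_insert.mp hm with rfl | hm' <;>
              first
                | exact hbsup
                | (rw [Finset.mem_singleton] at hm'; subst hm')
          · exact hxsup
          · exact ha
        · exact hy'
      have hssub : h.support ⊂ g.support := by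
        refine Finset.ssubset_iff_of_subset hsub |>.mpr ⟨a, ha, ?_⟩
        rw [Equiv.Perm.mem_support]; simpa using hha
      have hcardlt : h.support.card < n := hcard ▸ Finset.card_lt_card hssub
      have hh15 : h 15 = 15 := by
        rw [hh, Equiv.Perm.mul_apply, h15, hcyc, Equiv.Perm.mul_apply,
          Equiv.swap_apply_of_ne_of_ne (Ne.symm (hne15 b hbsup)) (Ne.symm (hne15 a ha)),
          Equiv.swap_apply_of_ne_of_ne (Ne.symm (hne15 b hbsup)) (Ne.symm (hne15 x hxsup))]
      have hhsign : Equiv.Perm.sign h = 1 := by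
        rw [hh, map_mul, hcyc, map_mul, Equiv.Perm.sign_swap (Ne.symm hxb),
          Equiv.Perm.sign_swap hba, hsign]
        decide
      have hH : h ∈ H := ih h.support.card hcardlt h rfl hh15 hhsign
      have : g = cyc⁻¹ * h := by rw [hh, inv_mul_cancel_left]
      rw [this]
      exact mul_mem (inv_mem hcyc_mem) hH

theorem blank_home_aux : ∀ (n : ℕ) (c : PuzzleConfig), 15 - (c.symm 15).val ≤ n →
    ∃ d, PuzzleReach c d ∧ d.symm 15 = 15 := by
  intro n
  induction n with
  | zero =>
    intro c h
    have hlt := (c.symm 15).isLt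
    exact ⟨c, Relation.ReflTransGen.refl, Fin.ext (by omega)⟩
  | succ n ihn =>
    intro c h
    by_cases hb : c.symm 15 = 15
    · exact ⟨c, Relation.ReflTransGen.refl, hb⟩
    · obtain ⟨p, hadj, hlt⟩ := exists_adj_gt _ hb
      have hplt := p.isLt
      obtain ⟨d, hd, hd15⟩ := ihn ((Equiv.swap p (c.symm 15)).trans c)
        (by rw [blank_after]; omega)
      exact ⟨d, Relation.ReflTransGen.head ⟨p, hadj, rfl⟩ hd, hd15⟩

theorem blank_home (c : PuzzleConfig) : ∃ d, PuzzleReach c d ∧ d.symm 15 = 15 :=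
  blank_home_aux 15 c (by omega)

theorem bSign_fifteen : bSign 15 = 1 := by decide

theorem reach_iff {c d : PuzzleConfig} : PuzzleReach c d ↔ pinv c = pinv d := by
  constructor
  · intro h; exact (reach_pinv h).symm
  · intro hpinv
    obtain ⟨c₀, hc₀, hc₀15⟩ := blank_home c
    obtain ⟨d₀, hd₀, hd₀15⟩ := blank_home d
    have hc0 : c₀ 15 = 15 := by conv_lhs => rw [← hc₀15]; rw [Equiv.apply_symm_apply]
    have hd0 : d₀ 15 = 15 := by conv_lhs => rw [← hd₀15]; rw [Equiv.apply_symm_apply]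
    have hpc : pinv c₀ = Equiv.Perm.sign c₀ := by
      rw [pinv, hc₀15, bSign_fifteen, mul_one]
    have hpd : pinv d₀ = Equiv.Perm.sign d₀ := by
      rw [pinv, hd₀15, bSign_fifteen, mul_one]
    have hsg : Equiv.Perm.sign c₀ = Equiv.Perm.sign d₀ := by
      rw [← hpc, ← hpd, reach_pinv hc₀, reach_pinv hd₀]
      exact hpinv
    set g := c₀⁻¹ * d₀ with hg
    have hg15 : g 15 = 15 := by
      rw [hg, Equiv.Perm.mul_apply, hd0]
      exact hc₀15
    have hgsign : Equiv.Perm.sign g = 1 := by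
      rw [hg, map_mul, map_inv, hsg]
      simp
    have hgH : g ∈ H := even_mem g.support.card g rfl hg15 hgsign
    have hreach : PuzzleReach c₀ d₀ := by
      have := reach_mul_left hc0 hgH.2
      rwa [mul_one, hg, mul_inv_cancel_left] at this
    exact hc₀.trans (hreach.trans (reach_symm hd₀))
-- part 4, still inside namespace Fifteen
theorem pinv_one : pinv 1 = 1 := by
  rw [pinv, map_one, one_mul]
  exact bSign_fifteen

theorem swap01_fix : Equiv.swap (0 : Fin 16) 1 15 = 15 :=
  Equiv.swap_apply_of_ne_of_ne (by decide) (by decide)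

theorem pinv_swap_mul (g : PuzzleConfig) : pinv (Equiv.swap 0 1 * g) = -pinv g := by
  have hblank : (Equiv.swap 0 1 * g).symm 15 = g.symm 15 := by
    show (g.trans (Equiv.swap 0 1)).symm 15 = _
    rw [Equiv.symm_trans_apply, Equiv.symm_swap, swap01_fix]
  rw [pinv, pinv, hblank, map_mul, Equiv.Perm.sign_swap (by decide), neg_one_mul, neg_mul]

theorem card_classes :
    (Finset.univ.filter fun d : PuzzleConfig => pinv d = 1).card = Nat.factorial 16 / 2 ∧
    (Finset.univ.filter fun d : PuzzleConfig => pinv d = -1).card = Nat.factorial 16 / 2 := by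
  have hbij : (Finset.univ.filter fun d : PuzzleConfig => pinv d = 1).card
      = (Finset.univ.filter fun d : PuzzleConfig => pinv d = -1).card := by
    refine Finset.card_bij' (fun g _ => Equiv.swap 0 1 * g) (fun g _ => Equiv.swap 0 1 * g)
      ?_ ?_ ?_ ?_
    · intro a ha
      rw [Finset.mem_filter] at ha ⊢
      refine ⟨Finset.mem_univ _, by rw [pinv_swap_mul, ha.2]⟩
    · intro a ha
      rw [Finset.mem_filter] at ha ⊢
      refine ⟨Finset.mem_univ _, by rw [pinv_swap_mul, ha.2]; decide⟩
    · intro a _; exact Equiv.swap_mul_self_mul 0 1 a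
    · intro a _; exact Equiv.swap_mul_self_mul 0 1 a
  have hdisj : Disjoint (Finset.univ.filter fun d : PuzzleConfig => pinv d = 1)
      (Finset.univ.filter fun d : PuzzleConfig => pinv d = -1) := by
    rw [Finset.disjoint_left]
    intro d h1 h2
    rw [Finset.mem_filter] at h1 h2
    rw [h1.2] at h2
    exact absurd h2.2 (by decide)
  have hunion : (Finset.univ.filter fun d : PuzzleConfig => pinv d = 1)
      ∪ (Finset.univ.filter fun d : PuzzleConfig => pinv d = -1) = Finset.univ := by
    ext d
    simp only [Finset.mem_union, Finset.mem_filter, Finset.mem_univ, true_and, iff_true]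
    exact Int.units_eq_one_or (pinv d)
  have htotal : (Finset.univ.filter fun d : PuzzleConfig => pinv d = 1).card
      + (Finset.univ.filter fun d : PuzzleConfig => pinv d = -1).card = Nat.factorial 16 := by
    rw [← Finset.card_union_of_disjoint hdisj, hunion, Finset.card_univ,
      Fintype.card_perm, Fintype.card_fin]
  constructor <;> omega

theorem class_ncard (c : PuzzleConfig) :
    {d | PuzzleReach c d}.ncard = Nat.factorial 16 / 2 := by
  have hset : {d | PuzzleReach c d} = {d | pinv d = pinv c} :=
    Set.ext fun d => ⟨fun h => reach_pinv h, fun h => reach_iff.mpr h.symm⟩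
  rw [hset, Set.ncard_eq_toFinset_card', Set.toFinset_setOf]
  rcases Int.units_eq_one_or (pinv c) with h | h <;> rw [h]
  · exact card_classes.1
  · exact card_classes.2

theorem pinv_swap01 : pinv (Equiv.swap 0 1) = -1 := by
  have := pinv_swap_mul 1
  rwa [mul_one, pinv_one] at this

end Fifteen

/-- The 15-puzzle configuration graph has exactly two connected components, each
of size `16!/2`; a configuration with the blank in its home cell is solvable from
the solved configuration if and only if it is an even permutation. -/
theorem fifteen_puzzle_two_components :
    (∀ c : PuzzleConfig, {d | PuzzleReach c d}.ncard = Nat.factorial 16 / 2) ∧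
    (∃ c₁ c₂ : PuzzleConfig, ¬ PuzzleReach c₁ c₂ ∧
      ∀ c, PuzzleReach c₁ c ∨ PuzzleReach c₂ c) ∧
    (∀ c : PuzzleConfig, c.symm 15 = 15 →
      (PuzzleReach (Equiv.refl (Fin 16)) c ↔ Equiv.Perm.sign c = 1)) := by
  refine ⟨Fifteen.class_ncard, ⟨1, Equiv.swap 0 1, ?_, ?_⟩, ?_⟩
  · intro h
    have h1 := Fifteen.reach_pinv h
    rw [Fifteen.pinv_swap01, Fifteen.pinv_one] at h1
    exact absurd h1 (by decide)
  · intro c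
    rcases Int.units_eq_one_or (Fifteen.pinv c) with h | h
    · exact Or.inl (Fifteen.reach_iff.mpr (by rw [Fifteen.pinv_one, h]))
    · exact Or.inr (Fifteen.reach_iff.mpr (by rw [Fifteen.pinv_swap01, h]))
  · intro c hc15
    have : Equiv.refl (Fin 16) = (1 : PuzzleConfig) := rfl
    rw [this, Fifteen.reach_iff, Fifteen.pinv_one, Fifteen.pinv, hc15,
      Fifteen.bSign_fifteen, mul_one]
    exact eq_comm
end

section
/- A continuous curve f : [0,1] → ℝ² that goes from the left edge to the right edge of a closed rectangle (f(0) on the left edge, f(1) on the right edge, image contained in the rectangle) separates the rectangle: any continuous curve in the rectangle from the bottom edge to the top edge must intersect the image of f. -/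
/-!
Put `F (s, t) = f s - g t`, viewed in `ℂ`. On the boundary of the unit square of parameters,
`Re F ≤ 0` on the left edge, `Re F ≥ 0` on the right one, `Im F ≥ 0` at the bottom and
`Im F ≤ 0` at the top. If `F` had no zero, it would have a continuous logarithm on the
(simply connected) square, so the continuous argument would return to its initial value around
the boundary. But along each edge `F` stays in a closed half-plane, where the continuous argument
changes exactly as the principal one; the sign conditions at the corners then force a net turn
that is negative, a contradiction.
-/

open Set Complex
open scoped Real

theorem Complex.continuousOn_arg_of_im_nonneg :
    ContinuousOn arg {z : ℂ | 0 ≤ z.im ∧ z ≠ 0} := by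
  rintro z ⟨him, hz⟩
  by_cases hslit : z ∈ slitPlane
  · exact (continuousAt_arg hslit).continuousWithinAt
  · obtain ⟨hre, him⟩ : z.re ≤ 0 ∧ z.im = 0 := by simpa [mem_slitPlane_iff, not_or] using hslit
    have hre : z.re < 0 := hre.lt_of_ne fun h => hz (Complex.ext h him)
    exact (continuousWithinAt_arg_of_re_neg_of_im_zero hre him).mono fun w hw => hw.1

theorem Complex.pi_div_two_le_arg {z : ℂ} (hz : z ≠ 0) (hre : z.re ≤ 0) (him : 0 ≤ z.im) :
    π / 2 ≤ arg z := by
  by_contra! hlt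
  rcases arg_lt_pi_div_two_iff.mp hlt with h | h | h
  exacts [hre.not_gt h, him.not_gt h, hz h]

section

variable {X : Type*} [TopologicalSpace X]

theorem exists_continuous_exp_eq [SimplyConnectedSpace X] [LocallyPathConnectedSpace X]
    {F : X → ℂ} (hF : Continuous F) (h0 : ∀ x, F x ≠ 0) :
    ∃ L : X → ℂ, Continuous L ∧ ∀ x, exp (L x) = F x := by
  obtain ⟨x₀⟩ : Nonempty X := inferInstance
  obtain ⟨L, ⟨-, hL⟩, -⟩ :=
    isCoveringMapOn_exp.existsUnique_continuousMap_lifts ⟨F, hF⟩ (exp_log (h0 x₀)) h0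
  exact ⟨L, L.continuous, congr_fun hL⟩

theorem im_sub_im_eq_arg_exp_sub_arg_exp {S : Set X} (hS : IsPreconnected S) {L : X → ℂ}
    (hL : ContinuousOn L S) (him : ∀ x ∈ S, 0 ≤ (exp (L x)).im) {x y : X} (hx : x ∈ S)
    (hy : y ∈ S) :
    (L x).im - (L y).im = arg (exp (L x)) - arg (exp (L y)) := by
  have hcont : ContinuousOn (fun x => (L x).im - arg (exp (L x))) S :=
    (continuous_im.comp_continuousOn hL).sub <| continuousOn_arg_of_im_nonneg.comp
      (continuous_exp.comp_continuousOn hL) fun x hx => ⟨him x hx, exp_ne_zero _⟩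
  have hmaps : MapsTo (fun x => (L x).im - arg (exp (L x))) S (AddSubgroup.zmultiples (2 * π)) :=
    fun x _ => by
      simp only [SetLike.mem_coe, arg_exp, self_sub_toIocMod]
      exact AddSubgroup.zsmul_mem_zmultiples _ _
  have := hS.constant_of_mapsTo (SetLike.isDiscrete_iff_discreteTopology.mpr inferInstance)
    hcont hmaps hx hy
  linarith

theorem im_sub_im_eq_arg_mul_sub_arg_mul {S : Set X} (hS : IsPreconnected S) {L F : X → ℂ}
    (hL : ContinuousOn L S) (hexp : ∀ x ∈ S, exp (L x) = F x) {u : ℂ} (hu : u ≠ 0)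
    (him : ∀ x ∈ S, 0 ≤ (u * F x).im) {x y : X} (hx : x ∈ S) (hy : y ∈ S) :
    (L x).im - (L y).im = arg (u * F x) - arg (u * F y) := by
  have hexp' : ∀ x ∈ S, exp (log u + L x) = u * F x := fun x hx => by
    rw [exp_add, exp_log hu, hexp x hx]
  have := im_sub_im_eq_arg_exp_sub_arg_exp (L := fun x => log u + L x) hS
    (continuousOn_const.add hL) (fun x hx => (hexp' x hx).symm ▸ him x hx) hx hy
  rw [hexp' x hx, hexp' y hy, add_im, add_im] at this
  linarith

end

abbrev unitSquare : Set (ℝ × ℝ) := Icc 0 1 ×ˢ Icc 0 1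

theorem exists_continuousOn_exp_eq_on_unitSquare {F : ℝ × ℝ → ℂ}
    (hF : ContinuousOn F unitSquare) (h0 : ∀ p ∈ unitSquare, F p ≠ 0) :
    ∃ L : ℝ × ℝ → ℂ, ContinuousOn L unitSquare ∧ ∀ p ∈ unitSquare, exp (L p) = F p := by
  set clamp : ℝ × ℝ → ℝ × ℝ := fun p => (projIcc 0 1 zero_le_one p.1, projIcc 0 1 zero_le_one p.2)
  have hclamp : ∀ p, clamp p ∈ unitSquare := fun p => ⟨Subtype.prop _, Subtype.prop _⟩
  have hclamp_id : ∀ p ∈ unitSquare, clamp p = p := fun p hp => by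
    simp [clamp, projIcc_of_mem _ hp.1, projIcc_of_mem _ hp.2]
  obtain ⟨L, hL, hexp⟩ := exists_continuous_exp_eq
    (hF.comp_continuous (by fun_prop) hclamp) fun p => h0 _ (hclamp p)
  exact ⟨L, hL.continuousOn, fun p hp => by simpa [hclamp_id p hp] using hexp p⟩

theorem arg_boundary_sum_neg {z₀₀ z₁₀ z₁₁ z₀₁ : ℂ}
    (h₀₀ : z₀₀ ≠ 0) (h₁₀ : z₁₀ ≠ 0) (h₁₁ : z₁₁ ≠ 0) (h₀₁ : z₀₁ ≠ 0)
    (hre₀₀ : z₀₀.re ≤ 0) (him₀₀ : 0 ≤ z₀₀.im) (hre₁₀ : 0 ≤ z₁₀.re) (him₁₀ : 0 ≤ z₁₀.im)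
    (hre₁₁ : 0 ≤ z₁₁.re) (him₁₁ : z₁₁.im ≤ 0) (hre₀₁ : z₀₁.re ≤ 0) (him₀₁ : z₀₁.im ≤ 0) :
    (arg z₁₀ - arg z₀₀) + (arg (I * z₁₁) - arg (I * z₁₀)) + (arg (-z₀₁) - arg (-z₁₁)) +
      (arg (-I * z₀₀) - arg (-I * z₀₁)) < 0 := by
  have hI : ∀ z : ℂ, (I * z).re = -z.im ∧ (I * z).im = z.re := fun z => by simp
  have hnI : ∀ z : ℂ, (-I * z).re = z.im ∧ (-I * z).im = -z.re := fun z => by simp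
  have b₁ : arg z₁₀ ≤ π / 2 := arg_le_pi_div_two_iff.2 (.inl hre₁₀)
  have b₂ : π / 2 ≤ arg z₀₀ := pi_div_two_le_arg h₀₀ hre₀₀ him₀₀
  have r₁ : arg (I * z₁₁) ≤ π / 2 := arg_le_pi_div_two_iff.2 (.inl (by linarith [hI z₁₁]))
  have r₂ : π / 2 ≤ arg (I * z₁₀) :=
    pi_div_two_le_arg (mul_ne_zero I_ne_zero h₁₀) (by linarith [hI z₁₀]) (by linarith [hI z₁₀])
  have t₁ : arg (-z₀₁) ≤ π / 2 := arg_le_pi_div_two_iff.2 (.inl (by simpa using hre₀₁))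
  have t₂ : π / 2 ≤ arg (-z₁₁) :=
    pi_div_two_le_arg (neg_ne_zero.2 h₁₁) (by simpa using hre₁₁) (by simpa using him₁₁)
  have l₁ : arg (-I * z₀₀) ≤ π / 2 := arg_le_pi_div_two_iff.2 (.inl (by linarith [hnI z₀₀]))
  have l₂ : π / 2 ≤ arg (-I * z₀₁) := pi_div_two_le_arg
    (mul_ne_zero (neg_ne_zero.2 I_ne_zero) h₀₁) (by linarith [hnI z₀₁]) (by linarith [hnI z₀₁])
  by_contra! hsum
  -- every edge turns by a nonpositive angle, so `z₁₀` would lie on both axes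
  have hre : z₁₀.re = 0 := (arg_eq_pi_div_two_iff.1 (by linarith)).1
  have him : (I * z₁₀).re = 0 := (arg_eq_pi_div_two_iff.1 (by linarith)).1
  exact h₁₀ (Complex.ext hre (by rw [zero_im]; linarith [(hI z₁₀).1]))

/-- A two-dimensional Poincaré–Miranda theorem. -/
theorem exists_eq_zero_of_boundary_signs {F : ℝ × ℝ → ℂ} (hF : ContinuousOn F unitSquare)
    (hleft : ∀ t ∈ Icc (0 : ℝ) 1, (F (0, t)).re ≤ 0)
    (hright : ∀ t ∈ Icc (0 : ℝ) 1, 0 ≤ (F (1, t)).re)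
    (hbot : ∀ s ∈ Icc (0 : ℝ) 1, 0 ≤ (F (s, 0)).im)
    (htop : ∀ s ∈ Icc (0 : ℝ) 1, (F (s, 1)).im ≤ 0) :
    ∃ p ∈ unitSquare, F p = 0 := by
  by_contra! h0
  obtain ⟨L, hL, hexp⟩ := exists_continuousOn_exp_eq_on_unitSquare hF h0
  have edge : ∀ S ⊆ unitSquare, IsPreconnected S → ∀ u : ℂ, u ≠ 0 →
      (∀ p ∈ S, 0 ≤ (u * F p).im) → ∀ p ∈ S, ∀ q ∈ S,
        (L p).im - (L q).im = arg (u * F p) - arg (u * F q) := fun S hS hSc u hu him p hp q hq =>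
    im_sub_im_eq_arg_mul_sub_arg_mul hSc (hL.mono hS) (fun p hp => hexp p (hS hp)) hu him hp hq
  have hzero : (0 : ℝ) ∈ Icc (0 : ℝ) 1 := left_mem_Icc.2 zero_le_one
  have hone : (1 : ℝ) ∈ Icc (0 : ℝ) 1 := right_mem_Icc.2 zero_le_one
  have bottom := edge (Icc 0 1 ×ˢ {0}) (prod_mono_right (singleton_subset_iff.2 hzero))
    (isPreconnected_Icc.prod isPreconnected_singleton) 1 one_ne_zero
    (by rintro ⟨s, t⟩ ⟨hs, rfl⟩; simpa using hbot s hs) (1, 0) ⟨hone, rfl⟩ (0, 0) ⟨hzero, rfl⟩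
  have right := edge ({1} ×ˢ Icc 0 1) (prod_mono_left (singleton_subset_iff.2 hone))
    (isPreconnected_singleton.prod isPreconnected_Icc) I I_ne_zero
    (by rintro ⟨s, t⟩ ⟨rfl, ht⟩; simpa using hright t ht) (1, 1) ⟨rfl, hone⟩ (1, 0) ⟨rfl, hzero⟩
  have top := edge (Icc 0 1 ×ˢ {1}) (prod_mono_right (singleton_subset_iff.2 hone))
    (isPreconnected_Icc.prod isPreconnected_singleton) (-1) (neg_ne_zero.2 one_ne_zero)
    (by rintro ⟨s, t⟩ ⟨hs, rfl⟩; simpa using htop s hs) (0, 1) ⟨hzero, rfl⟩ (1, 1) ⟨hone, rfl⟩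
  have left := edge ({0} ×ˢ Icc 0 1) (prod_mono_left (singleton_subset_iff.2 hzero))
    (isPreconnected_singleton.prod isPreconnected_Icc) (-I) (neg_ne_zero.2 I_ne_zero)
    (by rintro ⟨s, t⟩ ⟨rfl, ht⟩; simpa using hleft t ht) (0, 0) ⟨rfl, hzero⟩ (0, 1) ⟨rfl, hone⟩
  simp only [one_mul, neg_one_mul] at bottom top
  have := arg_boundary_sum_neg (h0 _ ⟨hzero, hzero⟩) (h0 _ ⟨hone, hzero⟩) (h0 _ ⟨hone, hone⟩)
    (h0 _ ⟨hzero, hone⟩) (hleft 0 hzero) (hbot 0 hzero) (hright 0 hzero) (hbot 1 hone)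
    (hright 1 hone) (htop 1 hone) (hleft 1 hone) (htop 0 hzero)
  linarith

theorem crossing_paths_in_rectangle_general (a b c d : ℝ)
    (f g : ℝ → ℝ × ℝ)
    (hf : ContinuousOn f (Icc 0 1)) (hg : ContinuousOn g (Icc 0 1))
    (hfR : ∀ t ∈ Icc (0:ℝ) 1, f t ∈ Icc a b ×ˢ Icc c d)
    (hgR : ∀ t ∈ Icc (0:ℝ) 1, g t ∈ Icc a b ×ˢ Icc c d)
    (hf0 : (f 0).1 = a) (hf1 : (f 1).1 = b)
    (hg0 : (g 0).2 = c) (hg1 : (g 1).2 = d) :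
    ∃ s ∈ Icc (0:ℝ) 1, ∃ t ∈ Icc (0:ℝ) 1, f s = g t := by
  obtain ⟨⟨s, t⟩, ⟨hs, ht⟩, hst⟩ := exists_eq_zero_of_boundary_signs
    (F := fun p => equivRealProdCLM.symm (f p.1 - g p.2))
    (equivRealProdCLM.symm.continuous.comp_continuousOn
      ((hf.comp continuousOn_fst fun _ hp => hp.1).sub (hg.comp continuousOn_snd fun _ hp => hp.2)))
    (fun t ht => by simpa [equivRealProdCLM_symm_apply, hf0] using (hgR t ht).1.1)
    (fun t ht => by simpa [equivRealProdCLM_symm_apply, hf1] using (hgR t ht).1.2)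
    (fun s hs => by simpa [equivRealProdCLM_symm_apply, hg0] using (hfR s hs).2.1)
    (fun s hs => by simpa [equivRealProdCLM_symm_apply, hg1] using (hfR s hs).2.2)
  exact ⟨s, hs, t, ht, equivRealProdCLM.symm.injective (sub_eq_zero.1 (by simpa using hst))⟩

/-- Crossing-paths (Hex) theorem in a rectangle: a continuous curve in the
rectangle from the left edge to the right edge meets every continuous curve in
the rectangle from the bottom edge to the top edge. -/
theorem crossing_paths_in_rectangle (a b c d : ℝ) (hab : a ≤ b) (hcd : c ≤ d)
    (f g : ℝ → ℝ × ℝ)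
    (hf : ContinuousOn f (Icc 0 1)) (hg : ContinuousOn g (Icc 0 1))
    (hfR : ∀ t ∈ Icc (0:ℝ) 1, f t ∈ Icc a b ×ˢ Icc c d)
    (hgR : ∀ t ∈ Icc (0:ℝ) 1, g t ∈ Icc a b ×ˢ Icc c d)
    (hf0 : (f 0).1 = a) (hf1 : (f 1).1 = b)
    (hg0 : (g 0).2 = c) (hg1 : (g 1).2 = d) :
    ∃ s ∈ Icc (0:ℝ) 1, ∃ t ∈ Icc (0:ℝ) 1, f s = g t :=
  crossing_paths_in_rectangle_general a b c d f g hf hg hfR hgR hf0 hf1 hg0 hg1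
end

section
/- If two continuous curves f, g : [0,1] → ℂ satisfy |f(t) − g(t)| < |f(t)| for all t, and both are loops (f(0)=f(1), g(0)=g(1)) avoiding 0, then f and g have the same winding number around 0 (dog-on-a-leash / Rouché-type theorem). -/
open Set

/-- `WindingIs γ p n` says that the loop `γ` (on `[0,1]`) has winding number `n`
around the point `p`, expressed via a continuous lift of the angle. -/
def WindingIs (γ : ℝ → ℂ) (p : ℂ) (n : ℤ) : Prop :=
  ∃ θ : ℝ → ℝ, ContinuousOn θ (Icc 0 1) ∧
    (∀ t ∈ Icc (0:ℝ) 1, γ t - p = (‖γ t - p‖ : ℂ) * Complex.exp (θ t * Complex.I)) ∧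
    θ 1 - θ 0 = 2 * Real.pi * n

/-!
Since `‖f t - g t‖ < ‖f t‖`, the point `g t` lies in the open disc centred at `f t` through `0`,
hence in the open half-plane facing `f t`: the angle between `f t` and `g t` has positive cosine.
The difference `φ = θ_g - θ_f` of the two angle lifts is therefore a continuous function with
`cos ∘ φ > 0`, so by the intermediate value theorem its range never reaches `φ 0 ± π` (where the
cosine is `-cos (φ 0) < 0`). Thus `|φ 1 - φ 0| < π`, whereas `φ 1 - φ 0 = 2π (n - m)`.
-/

open Real

theorem real_inner_pos_of_norm_sub_lt {E : Type*} [NormedAddCommGroup E]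
    [InnerProductSpace ℝ E] {x y : E} (h : ‖x - y‖ < ‖x‖) : 0 < inner ℝ x y := by
  nlinarith [norm_sub_sq_real x y, norm_nonneg (x - y), sq_nonneg ‖y‖]

theorem Complex.real_inner_ofReal_mul_exp (r s a b : ℝ) :
    inner ℝ ((r : ℂ) * Complex.exp (a * Complex.I)) ((s : ℂ) * Complex.exp (b * Complex.I)) =
      r * s * Real.cos (b - a) := by
  simp only [Complex.inner, Complex.mul_re, Complex.mul_im, Complex.conj_re, Complex.conj_im,
    Complex.ofReal_re, Complex.ofReal_im, Complex.exp_ofReal_mul_I_re,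
    Complex.exp_ofReal_mul_I_im, Real.cos_sub]
  ring

theorem cos_sub_pos_of_norm_sub_lt {z w : ℂ} {a b : ℝ}
    (hz : z = ‖z‖ * Complex.exp (a * Complex.I)) (hw : w = ‖w‖ * Complex.exp (b * Complex.I))
    (h : ‖z - w‖ < ‖z‖) : 0 < cos (b - a) := by
  have hinner := real_inner_pos_of_norm_sub_lt h
  rw [hz, hw, Complex.real_inner_ofReal_mul_exp] at hinner
  exact pos_of_mul_pos_right hinner (by positivity)

theorem abs_sub_lt_pi_of_cos_pos {X : Type*} [TopologicalSpace X] {s : Set X} {φ : X → ℝ}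
    (hs : IsPreconnected s) (hφ : ContinuousOn φ s) (hcos : ∀ t ∈ s, 0 < cos (φ t))
    {a b : X} (ha : a ∈ s) (hb : b ∈ s) : |φ b - φ a| < π := by
  have not_le_add_pi : ∀ x ∈ s, ∀ y ∈ s, ¬ φ x + π ≤ φ y := by
    intro x hx y hy hxy
    obtain ⟨t, ht, hφt⟩ := hs.intermediate_value hx hy hφ ⟨by linarith [pi_pos], hxy⟩
    have := hcos t ht
    rw [hφt, cos_add_pi] at this
    linarith [hcos x hx]
  rw [abs_sub_lt_iff]
  constructor
  · linarith [not_le_add_pi a ha b hb]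
  · linarith [not_le_add_pi b hb a ha]

theorem dog_on_a_leash_general (f g : ℝ → ℂ)
    (hclose : ∀ t ∈ Icc (0:ℝ) 1, ‖f t - g t‖ < ‖f t‖) :
    ∀ m n : ℤ, WindingIs f 0 m → WindingIs g 0 n → m = n := by
  rintro m n ⟨θf, hθf_cont, hθf, hθf_wind⟩ ⟨θg, hθg_cont, hθg, hθg_wind⟩
  simp only [sub_zero] at hθf hθg
  have hcos : ∀ t ∈ Icc (0:ℝ) 1, 0 < cos (θg t - θf t) := fun t ht =>
    cos_sub_pos_of_norm_sub_lt (hθf t ht) (hθg t ht) (hclose t ht)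
  have hlt := abs_sub_lt_pi_of_cos_pos (φ := fun t => θg t - θf t) isPreconnected_Icc
    (hθg_cont.sub hθf_cont) hcos (left_mem_Icc.2 zero_le_one) (right_mem_Icc.2 zero_le_one)
  have hdiff : θg 1 - θf 1 - (θg 0 - θf 0) = 2 * π * ((n - m : ℤ) : ℝ) := by
    push_cast
    linear_combination hθg_wind - hθf_wind
  rw [hdiff, abs_mul, abs_of_pos two_pi_pos] at hlt
  have hnm : |n - m| < 1 := by exact_mod_cast (by nlinarith [pi_pos] : |((n - m : ℤ) : ℝ)| < 1)
  exact (sub_eq_zero.1 (Int.abs_lt_one_iff.1 hnm)).symm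

/-- Dog-on-a-leash / Rouché: if two continuous loops avoiding 0 satisfy
 |f(t)-g(t)| < |f(t)| for all t, they have the same winding number around 0. -/
theorem dog_on_a_leash (f g : ℝ → ℂ)
    (hf : ContinuousOn f (Icc 0 1)) (hg : ContinuousOn g (Icc 0 1))
    (hfl : f 0 = f 1) (hgl : g 0 = g 1)
    (hf0 : ∀ t ∈ Icc (0:ℝ) 1, f t ≠ 0) (hg0 : ∀ t ∈ Icc (0:ℝ) 1, g t ≠ 0)
    (hclose : ∀ t ∈ Icc (0:ℝ) 1, ‖f t - g t‖ < ‖f t‖) :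
    ∀ m n : ℤ, WindingIs f 0 m → WindingIs g 0 n → m = n :=
  dog_on_a_leash_general f g hclose
end
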